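/- Let e = (1,2,1,1,1) ∈ ℤ^5, so that Q_7(e) = 0, and let M = {x ∈ ℤ^5 : B_7(x, e) = 0}. Then the subgroup of M generated by e together with all roots of M (i.e., all r ∈ M with Q_7(r) > 0 such that Q_7(r) divides 2·B_7(r, x) for every x ∈ M) is a proper subgroup of M. -/

import Mathlib

/-- The bilinear form `B_p(x,y) = -p·x_0·y_0 + x_1·y_1 + … + x_n·y_n` on `ℤ^{n+1}`. -/
def Bform (p : ℤ) {n : ℕ} (x y : Fin (n + 1) → ℤ) : ℤ :=
  -p * x 0 * y 0 + ∑ i ∈ Finset.univ.filter (fun i : Fin (n + 1) => i ≠ 0), x i * y i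

/-- The quadratic form `Q_p(x) = B_p(x,x)`. -/
def Qform (p : ℤ) {n : ℕ} (x : Fin (n + 1) → ℤ) : ℤ := Bform p x x

/-- The primitive null vector `e`. -/
def eVec : Fin 5 → ℤ := ![1, 2, 1, 1, 1]

/-!
Since `e` is isotropic and `M = e^⊥`, the form `B₇` on `M` descends to `M/ℤe`, which is the
lattice `K = n^⊥ ⊆ ℤ⁴`, `n = (2,-1,-1,-1)`, with the standard form; the second coordinate of
`x ∈ M` has the parity of the first coordinate of its image. A root `v` of `K` with odd first
coordinate has odd norm `q`, so `q ∣ v ⬝ w` for all `w ∈ K`; testing against `7eᵢ - nᵢn ∈ K` gives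
`q ∣ 7vᵢ` and hence `q ∣ 49`. The bound `7v₀² ≤ 3q` rules out `q = 1` and `q = 49` (where `v/7`
would have norm `1`), and a congruence mod `7` rules out `q = 7`. So `e` and all roots lie in the
subgroup of `M` with even second coordinate, which misses `(0,1,-2,0,0) ∈ M`.
-/

open Matrix

theorem dvd_mul_apply_of_forall_dvd_dotProduct {ι : Type*} [Fintype ι] [DecidableEq ι]
    {n v : ι → ℤ} {q : ℤ} (hv : v ⬝ᵥ n = 0) (h : ∀ w, w ⬝ᵥ n = 0 → q ∣ v ⬝ᵥ w) (i : ι) :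
    q ∣ (n ⬝ᵥ n) * v i := by
  have hw : ((n ⬝ᵥ n) • Pi.single i 1 - n i • n) ⬝ᵥ n = 0 := by
    simp only [sub_dotProduct, smul_dotProduct, single_dotProduct, smul_eq_mul]; ring
  simpa only [dotProduct_sub, dotProduct_smul, dotProduct_single, hv, smul_eq_mul, mul_one,
    mul_zero, sub_zero, mul_comm] using h _ hw

theorem dvd_sq_dotProduct_of_forall_dvd_dotProduct {ι : Type*} [Fintype ι]
    {n v : ι → ℤ} (hv : v ⬝ᵥ n = 0) (hpos : v ⬝ᵥ v ≠ 0)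
    (h : ∀ w, w ⬝ᵥ n = 0 → v ⬝ᵥ v ∣ v ⬝ᵥ w) :
    v ⬝ᵥ v ∣ (n ⬝ᵥ n) ^ 2 := by
  classical
  have hsq : (v ⬝ᵥ v) * (v ⬝ᵥ v) ∣ (n ⬝ᵥ n) ^ 2 * (v ⬝ᵥ v) := by
    rw [show (n ⬝ᵥ n) ^ 2 * (v ⬝ᵥ v) = ∑ i, ((n ⬝ᵥ n) * v i) * ((n ⬝ᵥ n) * v i) by
      rw [dotProduct.eq_1 v v, Finset.mul_sum]; exact Finset.sum_congr rfl fun i _ => by ring]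
    refine Finset.dvd_sum fun i _ => ?_
    exact mul_dvd_mul (dvd_mul_apply_of_forall_dvd_dotProduct hv h i)
      (dvd_mul_apply_of_forall_dvd_dotProduct hv h i)
  exact (mul_dvd_mul_iff_right hpos).1 hsq

theorem Bform_add_left (p : ℤ) {n : ℕ} (x y z : Fin (n + 1) → ℤ) :
    Bform p (x + y) z = Bform p x z + Bform p y z := by
  simp only [Bform, Pi.add_apply, add_mul, Finset.sum_add_distrib]; ring

theorem Bform_neg_left (p : ℤ) {n : ℕ} (x z : Fin (n + 1) → ℤ) :
    Bform p (-x) z = -Bform p x z := by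
  simp only [Bform, Pi.neg_apply, neg_mul, Finset.sum_neg_distrib]; ring

theorem Bform_fin_five (p : ℤ) (x y : Fin 5 → ℤ) :
    Bform p x y = -p * x 0 * y 0 + x 1 * y 1 + x 2 * y 2 + x 3 * y 3 + x 4 * y 4 := by
  simp only [Bform, Nat.reduceAdd, Finset.sum_filter, Fin.sum_univ_five, ne_eq, ite_not,
    ↓reduceIte, Fin.reduceEq]
  ring

def nVec : Fin 4 → ℤ := ![2, -1, -1, -1]

/-- Coordinates on `M / ℤ ∙ eVec`: the kernel is `ℤ ∙ eVec`, and `M = eVec^⊥` maps onto `nVec^⊥`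
with `B₇` becoming the dot product. -/
def reduceModE (x : Fin 5 → ℤ) : Fin 4 → ℤ := ![x 1 - 2 * x 0, x 0 - x 2, x 0 - x 3, x 0 - x 4]

theorem dotProduct_nVec (v : Fin 4 → ℤ) : v ⬝ᵥ nVec = 2 * v 0 - v 1 - v 2 - v 3 := by
  simp only [dotProduct, Fin.sum_univ_four, nVec, cons_val_zero, cons_val_one, cons_val]; ring

theorem dotProduct_self_fin_four (v : Fin 4 → ℤ) :
    v ⬝ᵥ v = v 0 ^ 2 + v 1 ^ 2 + v 2 ^ 2 + v 3 ^ 2 := by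
  simp only [dotProduct, Fin.sum_univ_four]; ring

theorem reduceModE_dotProduct_nVec (x : Fin 5 → ℤ) : reduceModE x ⬝ᵥ nVec = Bform 7 x eVec := by
  simp only [dotProduct_nVec, reduceModE, Bform_fin_five, eVec, cons_val_zero, cons_val_one, cons_val]
  ring

theorem Bform_eq_reduceModE_dotProduct (x y : Fin 5 → ℤ) :
    Bform 7 x y = reduceModE x ⬝ᵥ reduceModE y + x 0 * Bform 7 y eVec + y 0 * Bform 7 x eVec := by
  simp only [dotProduct, Fin.sum_univ_four, reduceModE, Bform_fin_five, eVec, cons_val_zero,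
    cons_val_one, cons_val]
  ring

theorem reduceModE_surjective : Function.Surjective reduceModE := fun w =>
  ⟨![0, w 0, -w 1, -w 2, -w 3], by ext i; fin_cases i <;> simp [reduceModE]⟩

theorem odd_dotProduct_self {v : Fin 4 → ℤ} (hv : v ⬝ᵥ nVec = 0) (h0 : Odd (v 0)) :
    Odd (v ⬝ᵥ v) := by
  obtain ⟨m, hm⟩ := h0
  obtain ⟨k0, hk0⟩ := Int.even_mul_pred_self (v 0)
  obtain ⟨k1, hk1⟩ := Int.even_mul_pred_self (v 1)
  obtain ⟨k2, hk2⟩ := Int.even_mul_pred_self (v 2)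
  obtain ⟨k3, hk3⟩ := Int.even_mul_pred_self (v 3)
  rw [dotProduct_nVec] at hv
  refine ⟨k0 + k1 + k2 + k3 + 3 * m + 1, ?_⟩
  rw [dotProduct_self_fin_four]
  linear_combination hk0 + hk1 + hk2 + hk3 + 3 * hm - hv

theorem seven_mul_sq_le_three_mul_dotProduct_self {v : Fin 4 → ℤ} (hv : v ⬝ᵥ nVec = 0) :
    7 * v 0 ^ 2 ≤ 3 * (v ⬝ᵥ v) := by
  have hsum : (v 1 + v 2 + v 3) ^ 2 = 4 * v 0 ^ 2 := by
    rw [dotProduct_nVec] at hv; linear_combination (-(v 1 + v 2 + v 3) - 2 * v 0) * hv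
  rw [dotProduct_self_fin_four]
  nlinarith [sq_nonneg (v 1 - v 2), sq_nonneg (v 1 - v 3), sq_nonneg (v 2 - v 3)]

theorem three_le_dotProduct_self {v : Fin 4 → ℤ} (hv : v ⬝ᵥ nVec = 0) (h0 : Odd (v 0)) :
    3 ≤ v ⬝ᵥ v := by
  have hne : v 0 ≠ 0 := by rintro h; simp [h] at h0
  have h1 : 1 ≤ v 0 ^ 2 := (one_le_sq_iff_one_le_abs _).2 (Int.one_le_abs hne)
  have := seven_mul_sq_le_three_mul_dotProduct_self hv
  omega

theorem nVec_dotProduct_self : nVec ⬝ᵥ nVec = 7 := by decide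

theorem dotProduct_self_ne_seven {v : Fin 4 → ℤ} (hv : v ⬝ᵥ nVec = 0) (h0 : Odd (v 0))
    (hdvd : ∀ w, w ⬝ᵥ nVec = 0 → v ⬝ᵥ v ∣ v ⬝ᵥ w) : v ⬝ᵥ v ≠ 7 := by
  intro hq
  rw [hq] at hdvd
  -- `v₁ ≡ v₂ ≡ v₃ (mod 7)` and `|vᵢ| ≤ 2` force `v₁ = v₂ = v₃`, but `2v₀ = 3v₁` has no solution
  -- with `v₀ = ±1`.
  have h12 : (7 : ℤ) ∣ v 1 - v 2 := by
    simpa [dotProduct, Fin.sum_univ_four, sub_eq_add_neg] using hdvd ![0, 1, -1, 0] (by decide)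
  have h23 : (7 : ℤ) ∣ v 2 - v 3 := by
    simpa [dotProduct, Fin.sum_univ_four, sub_eq_add_neg] using hdvd ![0, 0, 1, -1] (by decide)
  have hcs := seven_mul_sq_le_three_mul_dotProduct_self hv
  rw [dotProduct_nVec] at hv
  rw [dotProduct_self_fin_four] at hq hcs
  have := sq_nonneg (v 0); have := sq_nonneg (v 1); have := sq_nonneg (v 2); have := sq_nonneg (v 3)
  have := abs_lt_of_sq_lt_sq' (show v 0 ^ 2 < 2 ^ 2 by linarith) (by norm_num)
  have := abs_lt_of_sq_lt_sq' (show v 1 ^ 2 < 3 ^ 2 by linarith) (by norm_num)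
  have := abs_lt_of_sq_lt_sq' (show v 2 ^ 2 < 3 ^ 2 by linarith) (by norm_num)
  have := abs_lt_of_sq_lt_sq' (show v 3 ^ 2 < 3 ^ 2 by linarith) (by norm_num)
  have : v 1 = v 2 := by omega
  have : v 2 = v 3 := by omega
  obtain ⟨m, hm⟩ := h0
  omega

theorem dotProduct_self_ne_forty_nine {v : Fin 4 → ℤ} (hv : v ⬝ᵥ nVec = 0) (h0 : Odd (v 0))
    (hdvd : ∀ w, w ⬝ᵥ nVec = 0 → v ⬝ᵥ v ∣ v ⬝ᵥ w) : v ⬝ᵥ v ≠ 49 := by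
  intro hq
  have h7 : ∀ i, (7 : ℤ) ∣ v i := fun i => by
    have := dvd_mul_apply_of_forall_dvd_dotProduct hv hdvd i
    rw [hq, nVec_dotProduct_self] at this
    omega
  choose u hu using h7
  have hvu : v = (7 : ℤ) • u := funext hu
  rw [hvu] at hv hq h0
  have hu0 : Odd (u 0) := (Int.odd_mul.1 h0).2
  simp only [smul_dotProduct, dotProduct_smul, smul_eq_mul] at hv hq
  have huv : u ⬝ᵥ nVec = 0 := by linarith
  have huu : u ⬝ᵥ u = 1 := by linarith
  have := three_le_dotProduct_self huv hu0
  omega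

theorem even_of_forall_dvd_two_mul_dotProduct {v : Fin 4 → ℤ} (hv : v ⬝ᵥ nVec = 0)
    (hpos : 0 < v ⬝ᵥ v) (hroot : ∀ w, w ⬝ᵥ nVec = 0 → v ⬝ᵥ v ∣ 2 * (v ⬝ᵥ w)) :
    Even (v 0) := by
  by_contra hev
  have h0 : Odd (v 0) := Int.not_even_iff_odd.1 hev
  obtain ⟨m, hm⟩ := odd_dotProduct_self hv h0
  have hdvd : ∀ w, w ⬝ᵥ nVec = 0 → v ⬝ᵥ v ∣ v ⬝ᵥ w := fun w hw =>
    IsCoprime.dvd_of_dvd_mul_left ⟨1, -m, by rw [hm]; ring⟩ (hroot w hw)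
  have hq49 := dvd_sq_dotProduct_of_forall_dvd_dotProduct hv hpos.ne' hdvd
  rw [nVec_dotProduct_self] at hq49
  have hq3 := three_le_dotProduct_self hv h0
  have hne7 := dotProduct_self_ne_seven hv h0 hdvd
  have hne49 := dotProduct_self_ne_forty_nine hv h0 hdvd
  generalize v ⬝ᵥ v = q at *
  have := Int.le_of_dvd (by norm_num) hq49
  interval_cases q <;> omega

theorem Qform_eq_reduceModE_dotProduct_self {x : Fin 5 → ℤ} (hx : Bform 7 x eVec = 0) :
    Qform 7 x = reduceModE x ⬝ᵥ reduceModE x := by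
  rw [Qform, Bform_eq_reduceModE_dotProduct, hx]; ring

theorem even_apply_one_of_isRoot {r : Fin 5 → ℤ} (hr : Bform 7 r eVec = 0)
    (hpos : 0 < Qform 7 r) (hroot : ∀ x, Bform 7 x eVec = 0 → Qform 7 r ∣ 2 * Bform 7 r x) :
    Even (r 1) := by
  rw [Qform_eq_reduceModE_dotProduct_self hr] at hpos hroot
  have hreduce : Even (reduceModE r 0) := by
    refine even_of_forall_dvd_two_mul_dotProduct (by rw [reduceModE_dotProduct_nVec, hr]) hpos
      fun w hw => ?_
    obtain ⟨x, rfl⟩ := reduceModE_surjective w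
    have hx : Bform 7 x eVec = 0 := by rw [← reduceModE_dotProduct_nVec, hw]
    simpa [Bform_eq_reduceModE_dotProduct r x, hr, hx] using hroot x hx
  have h : r 1 = reduceModE r 0 + 2 * r 0 := by simp [reduceModE]
  rw [h]
  exact hreduce.add (even_two_mul _)

def evenSubgroup : AddSubgroup (Fin 5 → ℤ) where
  carrier := {x | Bform 7 x eVec = 0 ∧ Even (x 1)}
  add_mem' := by
    rintro x y ⟨hx, hx1⟩ ⟨hy, hy1⟩
    exact ⟨by rw [Bform_add_left, hx, hy, add_zero], hx1.add hy1⟩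
  zero_mem' := ⟨by simp [Bform], Even.zero⟩
  neg_mem' := by
    rintro x ⟨hx, hx1⟩
    exact ⟨by rw [Bform_neg_left, hx, neg_zero], hx1.neg⟩

theorem stmt13 :
    Qform 7 eVec = 0 ∧
    ((AddSubgroup.closure (insert eVec
        {r : Fin 5 → ℤ | Bform 7 r eVec = 0 ∧ 0 < Qform 7 r ∧
          ∀ x : Fin 5 → ℤ, Bform 7 x eVec = 0 → Qform 7 r ∣ 2 * Bform 7 r x}) :
        Set (Fin 5 → ℤ)) ⊂ {x : Fin 5 → ℤ | Bform 7 x eVec = 0}) := by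
  have hle : AddSubgroup.closure (insert eVec
      {r : Fin 5 → ℤ | Bform 7 r eVec = 0 ∧ 0 < Qform 7 r ∧
        ∀ x : Fin 5 → ℤ, Bform 7 x eVec = 0 → Qform 7 r ∣ 2 * Bform 7 r x}) ≤ evenSubgroup := by
    rw [AddSubgroup.closure_le]
    rintro r (rfl | ⟨hr, hpos, hroot⟩)
    · exact ⟨by decide, by decide⟩
    · exact ⟨hr, even_apply_one_of_isRoot hr hpos hroot⟩
  refine ⟨by decide, fun x hx => (hle hx).1, fun hM => ?_⟩
  have hodd : ¬Even ((![0, 1, -2, 0, 0] : Fin 5 → ℤ) 1) := by decide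
  exact hodd (hle (hM (show Bform 7 ![0, 1, -2, 0, 0] eVec = 0 by decide))).2
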